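/- arXiv:math/0406398 — 4 statements merged into one kernel-verified Lean document; each statement's English description precedes it below -/
import Mathlib

section
/- Let X, Y be nonnegative real random variables and V a nonnegative real random variable such that for all nonnegative α ≠ β one has E[exp(-αX - βY)] = (1/(α-β)) · ∫_β^α E[exp(-γV)] dγ. Then X + Y has the same distribution as V. -/
open MeasureTheory ProbabilityTheory Real

section LaplaceAux

variable {Ω : Type*} [MeasurableSpace Ω] {P : Measure Ω} [IsProbabilityMeasure P]

lemma aux_int2 {S T : Ω → ℝ} (hSm : Measurable S) (hTm : Measurable T)
    (hS : ∀ ω, 0 ≤ S ω) (hT : ∀ ω, 0 ≤ T ω) {a b : ℝ} (ha : 0 ≤ a) (hb : 0 ≤ b) :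
    Integrable (fun ω => Real.exp (-(a * S ω) - b * T ω)) P := by
  refine Integrable.mono' (integrable_const 1) ?_ ?_
  · exact (Real.measurable_exp.comp
      (((measurable_const.mul hSm).neg.sub (measurable_const.mul hTm)))).aestronglyMeasurable
  · refine Filter.Eventually.of_forall fun ω => ?_
    rw [Real.norm_eq_abs, abs_of_pos (Real.exp_pos _)]
    rw [show (1 : ℝ) = Real.exp 0 by simp]
    apply Real.exp_le_exp.2
    have := mul_nonneg ha (hS ω)
    have := mul_nonneg hb (hT ω)
    linarith

lemma aux_int {S : Ω → ℝ} (hSm : Measurable S) (hS : ∀ ω, 0 ≤ S ω) {t : ℝ} (ht : 0 ≤ t) :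
    Integrable (fun ω => Real.exp (-(t * S ω))) P := by
  have := aux_int2 (P := P) hSm hSm hS hS ht le_rfl (b := 0)
  simpa using this

lemma aux_anti {S : Ω → ℝ} (hSm : Measurable S) (hS : ∀ ω, 0 ≤ S ω) :
    AntitoneOn (fun t => ∫ ω, Real.exp (-(t * S ω)) ∂P) (Set.Ici 0) := by
  intro s hs t ht hst
  refine integral_mono (aux_int hSm hS ht) (aux_int hSm hS hs) fun ω => ?_
  apply Real.exp_le_exp.2
  simp only [neg_le_neg_iff]
  exact mul_le_mul_of_nonneg_right hst (hS ω)

lemma aux_cont {S : Ω → ℝ} (hSm : Measurable S) (hS : ∀ ω, 0 ≤ S ω) :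
    ContinuousOn (fun t => ∫ ω, Real.exp (-(t * S ω)) ∂P) (Set.Ici 0) := by
  intro t ht
  apply continuousWithinAt_of_dominated (bound := fun _ => 1)
  · exact Filter.Eventually.of_forall fun x =>
      (Real.measurable_exp.comp ((measurable_const.mul hSm).neg)).aestronglyMeasurable
  · filter_upwards [self_mem_nhdsWithin] with x hx
    refine Filter.Eventually.of_forall fun ω => ?_
    rw [Real.norm_eq_abs, abs_of_pos (Real.exp_pos _)]
    rw [show (1 : ℝ) = Real.exp 0 by simp]
    exact Real.exp_le_exp.2 (by simpa using mul_nonneg hx (hS ω))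
  · exact integrable_const 1
  · exact Filter.Eventually.of_forall fun ω =>
      (Real.continuous_exp.comp ((continuous_mul_right _).neg)).continuousWithinAt

lemma aux_key
    (X Y V : Ω → ℝ) (hXm : Measurable X) (hYm : Measurable Y) (hVm : Measurable V)
    (hX : ∀ ω, 0 ≤ X ω) (hY : ∀ ω, 0 ≤ Y ω) (hV : ∀ ω, 0 ≤ V ω)
    (hLap : ∀ α β : ℝ, 0 ≤ α → 0 ≤ β → α ≠ β →
      ∫ ω, Real.exp (-(α * X ω) - β * Y ω) ∂P
        = (1 / (α - β)) * ∫ γ in β..α, ∫ ω, Real.exp (-(γ * V ω)) ∂P)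
    {t : ℝ} (ht : 0 ≤ t) :
    ∫ ω, Real.exp (-(t * (X ω + Y ω))) ∂P = ∫ ω, Real.exp (-(t * V ω)) ∂P := by
  set g : ℝ → ℝ := fun s => ∫ ω, Real.exp (-(s * V ω)) ∂P with hg
  set f : ℝ → ℝ := fun s => ∫ ω, Real.exp (-(s * (X ω + Y ω))) ∂P with hf
  have hSm : Measurable (fun ω => X ω + Y ω) := hXm.add hYm
  have hS : ∀ ω, 0 ≤ X ω + Y ω := fun ω => add_nonneg (hX ω) (hY ω)
  have hganti := aux_anti (P := P) hVm hV
  have hgint : ∀ {a b : ℝ}, 0 ≤ a → 0 ≤ b → IntervalIntegrable g MeasureTheory.volume a b := by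
    intro a b ha hb
    apply AntitoneOn.intervalIntegrable
    exact hganti.mono (fun x hx => le_trans (le_min ha hb) hx.1)
  rcases eq_or_lt_of_le ht with h0 | htpos
  · simp [hf, hg, ← h0]
  -- key1 : for 0 ≤ s < t, f t ≤ g s
  have key1 : ∀ s, 0 ≤ s → s < t → f t ≤ g s := by
    intro s hs hst
    have hne : t ≠ s := ne_of_gt hst
    have hl := hLap t s ht hs hne
    have h1 : f t ≤ ∫ ω, Real.exp (-(t * X ω) - s * Y ω) ∂P := by
      refine integral_mono (aux_int hSm hS ht) (aux_int2 hXm hYm hX hY ht hs) fun ω => ?_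
      apply Real.exp_le_exp.2
      have := mul_le_mul_of_nonneg_right hst.le (hY ω)
      nlinarith [hY ω]
    have h2 : (∫ γ in s..t, g γ) ≤ (t - s) * g s := by
      have := intervalIntegral.integral_mono_on hst.le (hgint hs ht)
        (intervalIntegrable_const (c := g s)) (fun x hx => hganti (Set.mem_Ici.2 hs)
          (Set.mem_Ici.2 (hs.trans hx.1)) hx.1)
      simpa [smul_eq_mul] using this
    calc f t ≤ ∫ ω, Real.exp (-(t * X ω) - s * Y ω) ∂P := h1
      _ = (1 / (t - s)) * ∫ γ in s..t, g γ := hl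
      _ ≤ (1 / (t - s)) * ((t - s) * g s) := by
          have hpos : (0:ℝ) < t - s := sub_pos.2 hst
          apply mul_le_mul_of_nonneg_left h2 (by positivity)
      _ = g s := by
          have hpos : (0:ℝ) < t - s := sub_pos.2 hst
          field_simp
  -- key2 : for t < u, g u ≤ f t
  have key2 : ∀ u, t < u → g u ≤ f t := by
    intro u htu
    have hu : 0 ≤ u := ht.trans htu.le
    have hne : u ≠ t := ne_of_gt htu
    have hl := hLap u t hu ht hne
    have h1 : (∫ ω, Real.exp (-(u * X ω) - t * Y ω) ∂P) ≤ f t := by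
      refine integral_mono (aux_int2 hXm hYm hX hY hu ht) (aux_int hSm hS ht) fun ω => ?_
      apply Real.exp_le_exp.2
      have := mul_le_mul_of_nonneg_right htu.le (hX ω)
      nlinarith [hX ω]
    have h2 : (u - t) * g u ≤ ∫ γ in t..u, g γ := by
      have := intervalIntegral.integral_mono_on htu.le
        (intervalIntegrable_const (c := g u)) (hgint ht hu)
        (fun x hx => hganti (Set.mem_Ici.2 (ht.trans hx.1)) (Set.mem_Ici.2 hu) hx.2)
      simpa [smul_eq_mul] using this
    have hpos : (0:ℝ) < u - t := sub_pos.2 htu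
    calc g u = (1 / (u - t)) * ((u - t) * g u) := by field_simp
      _ ≤ (1 / (u - t)) * ∫ γ in t..u, g γ := by
          apply mul_le_mul_of_nonneg_left h2 (by positivity)
      _ = ∫ ω, Real.exp (-(u * X ω) - t * Y ω) ∂P := hl.symm
      _ ≤ f t := h1
  -- conclude by continuity of g at t
  have hgcont : ContinuousWithinAt g (Set.Ici 0) t := aux_cont hVm hV t ht
  have hle1 : g t ≤ f t := by
    have htend : Filter.Tendsto g (nhdsWithin t (Set.Ioi t)) (nhds (g t)) :=
      hgcont.tendsto.mono_left (nhdsWithin_mono t (fun x hx => le_of_lt (htpos.trans hx)))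
    exact le_of_tendsto htend (Filter.eventually_of_mem self_mem_nhdsWithin fun u hu => key2 u hu)
  have hle2 : f t ≤ g t := by
    have hne : (nhdsWithin t (Set.Ioo 0 t)).NeBot := by
      exact right_nhdsWithin_Ioo_neBot htpos
    have htend : Filter.Tendsto g (nhdsWithin t (Set.Ioo 0 t)) (nhds (g t)) :=
      hgcont.tendsto.mono_left (nhdsWithin_mono t (fun x hx => le_of_lt hx.1))
    exact ge_of_tendsto htend
      (Filter.eventually_of_mem self_mem_nhdsWithin fun s hs => key1 s hs.1.le hs.2)
  linarith

end LaplaceAux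

lemma aux_intg {μ : Measure ℝ} [IsProbabilityMeasure μ]
    (hμ : ∀ᵐ x ∂μ, x ∈ Set.Icc (0:ℝ) 1) {h : ℝ → ℝ} (hc : Continuous h) :
    Integrable h μ := by
  obtain ⟨C, hC⟩ := (isCompact_Icc (a := (0:ℝ)) (b := 1)).exists_bound_of_continuousOn
    hc.continuousOn
  refine Integrable.mono' (integrable_const C) hc.aestronglyMeasurable ?_
  filter_upwards [hμ] with x hx using hC x hx

/-- Two probability measures concentrated on `[0,1]` with equal moments are equal. -/
lemma moment_ext {μ ν : Measure ℝ} [IsProbabilityMeasure μ] [IsProbabilityMeasure ν]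
    (hμ : ∀ᵐ x ∂μ, x ∈ Set.Icc (0:ℝ) 1) (hν : ∀ᵐ x ∂ν, x ∈ Set.Icc (0:ℝ) 1)
    (hm : ∀ n : ℕ, ∫ x, x ^ n ∂μ = ∫ x, x ^ n ∂ν) : μ = ν := by
  have hpoly : ∀ q : Polynomial ℝ, ∫ x, q.eval x ∂μ = ∫ x, q.eval x ∂ν := by
    intro q
    induction q using Polynomial.induction_on' with
    | add p r hp hr =>
        simp only [Polynomial.eval_add]
        rw [integral_add (aux_intg hμ (Polynomial.continuous p))
            (aux_intg hμ (Polynomial.continuous r)),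
          integral_add (aux_intg hν (Polynomial.continuous p))
            (aux_intg hν (Polynomial.continuous r)), hp, hr]
    | monomial n a =>
        simp only [Polynomial.eval_monomial]
        rw [integral_const_mul, integral_const_mul, hm n]
  have hcont : ∀ h : ℝ → ℝ, Continuous h → ∫ x, h x ∂μ = ∫ x, h x ∂ν := by
    intro h hc
    have key : ∀ ε : ℝ, 0 < ε → |(∫ x, h x ∂μ) - ∫ x, h x ∂ν| ≤ 2 * ε := by
      intro ε hε
      set H : C(Set.Icc (0:ℝ) 1, ℝ) := ⟨fun x => h x, hc.comp continuous_subtype_val⟩ with hH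
      obtain ⟨q, hq⟩ := exists_polynomial_near_continuousMap 0 1 H ε hε
      have hbd : ∀ x ∈ Set.Icc (0:ℝ) 1, |q.eval x - h x| ≤ ε := by
        intro x hx
        have := ContinuousMap.norm_coe_le_norm (q.toContinuousMapOn _ - H) ⟨x, hx⟩
        simp only [ContinuousMap.sub_apply, Polynomial.toContinuousMapOn_apply,
          Polynomial.toContinuousMap_apply] at this
        calc |q.eval x - h x| ≤ ‖q.toContinuousMapOn _ - H‖ := by
              simpa [Real.norm_eq_abs, hH] using this
          _ ≤ ε := hq.le
      have hint1 : Integrable (fun x => q.eval x - h x) μ :=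
        aux_intg hμ ((Polynomial.continuous q).sub hc)
      have hint2 : Integrable (fun x => q.eval x - h x) ν :=
        aux_intg hν ((Polynomial.continuous q).sub hc)
      have e1 : |∫ x, (q.eval x - h x) ∂μ| ≤ ε := by
        calc |∫ x, (q.eval x - h x) ∂μ| ≤ ∫ x, |q.eval x - h x| ∂μ := by
              simpa [Real.norm_eq_abs] using norm_integral_le_integral_norm
                (fun x => q.eval x - h x) (μ := μ)
          _ ≤ ∫ _, ε ∂μ := by
              refine integral_mono_ae hint1.abs (integrable_const ε) ?_
              filter_upwards [hμ] with x hx using hbd x hx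
          _ = ε := by simp
      have e2 : |∫ x, (q.eval x - h x) ∂ν| ≤ ε := by
        calc |∫ x, (q.eval x - h x) ∂ν| ≤ ∫ x, |q.eval x - h x| ∂ν := by
              simpa [Real.norm_eq_abs] using norm_integral_le_integral_norm
                (fun x => q.eval x - h x) (μ := ν)
          _ ≤ ∫ _, ε ∂ν := by
              refine integral_mono_ae hint2.abs (integrable_const ε) ?_
              filter_upwards [hν] with x hx using hbd x hx
          _ = ε := by simp
      have d1 : ∫ x, (q.eval x - h x) ∂μ = (∫ x, q.eval x ∂μ) - ∫ x, h x ∂μ :=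
        integral_sub (aux_intg hμ (Polynomial.continuous q)) (aux_intg hμ hc)
      have d2 : ∫ x, (q.eval x - h x) ∂ν = (∫ x, q.eval x ∂ν) - ∫ x, h x ∂ν :=
        integral_sub (aux_intg hν (Polynomial.continuous q)) (aux_intg hν hc)
      have := hpoly q
      rw [d1] at e1; rw [d2] at e2
      rw [abs_le] at e1 e2 ⊢
      constructor <;> linarith [e1.1, e1.2, e2.1, e2.2]
    by_contra hne
    have hpos : 0 < |(∫ x, h x ∂μ) - ∫ x, h x ∂ν| := abs_pos.2 (sub_ne_zero.2 hne)
    have := key (|(∫ x, h x ∂μ) - ∫ x, h x ∂ν| / 4) (by positivity)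
    linarith
  apply ext_of_forall_lintegral_eq_of_IsFiniteMeasure
  intro f
  have hfc : Continuous fun x => (f x : ℝ) := NNReal.continuous_coe.comp f.continuous
  rw [lintegral_coe_eq_integral f (aux_intg hμ hfc), lintegral_coe_eq_integral f (aux_intg hν hfc),
    hcont _ hfc]

/-- If nonnegative random variables `X, Y, V` satisfy the joint Laplace transform identity
`E[exp(-αX-βY)] = (1/(α-β)) ∫_β^α E[exp(-γV)] dγ` for all distinct nonnegative `α, β`,
then `X + Y` has the same distribution as `V`. -/
theorem sum_eq_dist_of_laplace_identity
    {Ω : Type*} [MeasurableSpace Ω] (P : Measure Ω) [IsProbabilityMeasure P]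
    (X Y V : Ω → ℝ) (hXm : Measurable X) (hYm : Measurable Y) (hVm : Measurable V)
    (hX : ∀ ω, 0 ≤ X ω) (hY : ∀ ω, 0 ≤ Y ω) (hV : ∀ ω, 0 ≤ V ω)
    (hLap : ∀ α β : ℝ, 0 ≤ α → 0 ≤ β → α ≠ β →
      ∫ ω, Real.exp (-(α * X ω) - β * Y ω) ∂P
        = (1 / (α - β)) * ∫ γ in β..α, ∫ ω, Real.exp (-(γ * V ω)) ∂P) :
    Measure.map (fun ω => X ω + Y ω) P = Measure.map V P := by
  set S : Ω → ℝ := fun ω => X ω + Y ω with hSdef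
  have hSm : Measurable S := hXm.add hYm
  have hS : ∀ ω, 0 ≤ S ω := fun ω => add_nonneg (hX ω) (hY ω)
  set e : ℝ → ℝ := fun x => Real.exp (-x) with he
  have hem : Measurable e := (Real.continuous_exp.comp continuous_neg).measurable
  have heinj : Function.Injective e := by
    intro a b hab
    have := Real.exp_eq_exp.1 hab
    linarith [neg_inj.1 this]
  -- the pushforwards under `e` of both distributions
  have hmemIcc : ∀ {W : Ω → ℝ}, (∀ ω, 0 ≤ W ω) → Measurable W →
      ∀ᵐ x ∂(Measure.map (fun ω => e (W ω)) P), x ∈ Set.Icc (0:ℝ) 1 := by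
    intro W hW hWm
    have hWem : Measurable fun ω => e (W ω) := hem.comp hWm
    refine (MeasureTheory.ae_map_iff hWem.aemeasurable measurableSet_Icc).2 ?_
    refine Filter.Eventually.of_forall fun ω => ?_
    constructor
    · exact (Real.exp_pos _).le
    · exact Real.exp_le_one_iff.2 (by simpa using hW ω)
  have hmap : ∀ {W : Ω → ℝ}, Measurable W →
      (∀ n : ℕ, ∫ x, x ^ n ∂(Measure.map (fun ω => e (W ω)) P)
        = ∫ ω, Real.exp (-((n : ℝ) * W ω)) ∂P) := by
    intro W hWm n
    have hWem : Measurable fun ω => e (W ω) := hem.comp hWm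
    rw [integral_map hWem.aemeasurable (Continuous.aestronglyMeasurable (by continuity))]
    congr 1
    funext ω
    rw [← Real.exp_nat_mul]
    ring_nf
  have hkey : ∀ n : ℕ, ∫ ω, Real.exp (-((n : ℝ) * S ω)) ∂P
      = ∫ ω, Real.exp (-((n : ℝ) * V ω)) ∂P :=
    fun n => aux_key X Y V hXm hYm hVm hX hY hV hLap (Nat.cast_nonneg n)
  have hmapS : IsProbabilityMeasure (Measure.map (fun ω => e (S ω)) P) :=
    Measure.isProbabilityMeasure_map (hem.comp hSm).aemeasurable
  have hmapV : IsProbabilityMeasure (Measure.map (fun ω => e (V ω)) P) :=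
    Measure.isProbabilityMeasure_map (hem.comp hVm).aemeasurable
  have heq : Measure.map (fun ω => e (S ω)) P = Measure.map (fun ω => e (V ω)) P := by
    refine moment_ext (hmemIcc hS hSm) (hmemIcc hV hVm) fun n => ?_
    rw [hmap hSm n, hmap hVm n, hkey n]
  -- now invert the measurable embedding `e`
  have hemb : MeasurableEmbedding e := hem.measurableEmbedding heinj
  have h1 : Measure.map (fun ω => e (S ω)) P = Measure.map e (Measure.map S P) :=
    (Measure.map_map hem hSm).symm
  have h2 : Measure.map (fun ω => e (V ω)) P = Measure.map e (Measure.map V P) :=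
    (Measure.map_map hem hVm).symm
  rw [h1, h2] at heq
  ext s hs
  have him : MeasurableSet (e '' s) := hemb.measurableSet_image.2 hs
  have e1 : Measure.map S P s = Measure.map e (Measure.map S P) (e '' s) := by
    rw [Measure.map_apply hem him, heinj.preimage_image]
  have e2 : Measure.map V P s = Measure.map e (Measure.map V P) (e '' s) := by
    rw [Measure.map_apply hem him, heinj.preimage_image]
  rw [e1, e2, heq]
end

section
/- Let (X,Y) be a pair of nonnegative random variables with (X,Y) equal in distribution to (UV,(1-U)V) for U uniform on (0,1) independent of a nonnegative random variable V, and define I(α) := ∫_0^α E[exp(-γV)] dγ. Then for all α > 0, E[exp(-αX)] = I(α)/α, and for all α ≠ β positive, E[exp(-αX - βY)] = (I(α) - I(β))/(α - β). -/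
open MeasureTheory ProbabilityTheory Real

/-!
Since `a UV + b (1 - U) V = ((a - b) U + b) V`, independence and Fubini give
`E[exp(-aX - bY)] = ∫₀¹ L((a - b) u + b) du` with `L γ = E[exp(-γV)]`. The affine substitution
`γ = (a - b) u + b` turns this into `(∫_b^a L) / (a - b)`, which is `(I a - I b) / (a - b)`;
the case `b = 0` gives `I a / a`.
-/

section

variable {Ω : Type*} [MeasurableSpace Ω] {P : Measure Ω}

theorem integral_comp_eq_integral_integral_of_indepFun {α β : Type*} [MeasurableSpace α]
    [MeasurableSpace β] [IsFiniteMeasure P] {U : Ω → α} {V : Ω → β}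
    (hUm : Measurable U) (hVm : Measurable V) (hInd : IndepFun U V P) {f : α × β → ℝ}
    (hf : StronglyMeasurable f) (hfi : Integrable (fun ω => f (U ω, V ω)) P) :
    ∫ ω, f (U ω, V ω) ∂P = ∫ u, ∫ ω, f (u, V ω) ∂P ∂(P.map U) := by
  have hUV : Measurable fun ω => (U ω, V ω) := hUm.prodMk hVm
  have hmap := hInd.map_prod_eq_prod_map_map hUm.aemeasurable hVm.aemeasurable
  rw [← integral_map hUV.aemeasurable hf.aestronglyMeasurable, hmap, integral_prod]
  · refine integral_congr_ae (ae_of_all _ fun u => ?_)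
    exact integral_map hVm.aemeasurable
      (hf.comp_measurable measurable_prodMk_left).aestronglyMeasurable
  · rw [← hmap]
    exact (integrable_map_measure hf.aestronglyMeasurable hUV.aemeasurable).2 hfi

theorem setIntegral_Ioo_zero_one_comp_mul_add (g : ℝ → ℝ) {c : ℝ} (hc : c ≠ 0) (d : ℝ) :
    ∫ u in Set.Ioo (0 : ℝ) 1, g (c * u + d) = c⁻¹ * ∫ x in d..c + d, g x := by
  rw [← integral_Ioc_eq_integral_Ioo, ← intervalIntegral.integral_of_le zero_le_one,
    intervalIntegral.integral_comp_mul_add g hc d, smul_eq_mul, mul_zero, zero_add, mul_one]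

variable [IsProbabilityMeasure P] {V : Ω → ℝ}

theorem norm_integral_exp_neg_mul_le_one (hV : ∀ᵐ ω ∂P, 0 ≤ V ω) {γ : ℝ} (hγ : 0 ≤ γ) :
    ‖∫ ω, exp (-(γ * V ω)) ∂P‖ ≤ 1 := by
  have hle : ∀ᵐ ω ∂P, ‖exp (-(γ * V ω))‖ ≤ 1 := hV.mono fun ω hω => by
    rw [norm_of_nonneg (exp_pos _).le, exp_le_one_iff, neg_nonpos]
    exact mul_nonneg hγ hω
  simpa using norm_integral_le_of_norm_le_const hle

theorem intervalIntegrable_integral_exp_neg_mul (hVm : Measurable V) (hV : ∀ᵐ ω ∂P, 0 ≤ V ω)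
    {a b : ℝ} (ha : 0 ≤ a) (hb : 0 ≤ b) :
    IntervalIntegrable (fun γ => ∫ ω, exp (-(γ * V ω)) ∂P) volume a b := by
  have hmeas : StronglyMeasurable fun γ => ∫ ω, exp (-(γ * V ω)) ∂P :=
    (measurable_fst.mul (hVm.comp measurable_snd)).neg.exp.stronglyMeasurable.integral_prod_right'
  refine (intervalIntegrable_const (c := (1 : ℝ))).mono_fun' hmeas.aestronglyMeasurable ?_
  filter_upwards [ae_restrict_mem measurableSet_uIoc] with γ hγ
  exact norm_integral_exp_neg_mul_le_one hV (le_min ha hb |>.trans hγ.1.le)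

theorem integral_exp_neg_mul_uniform_split {U : Ω → ℝ} (hUm : Measurable U) (hVm : Measurable V)
    (hU : P.map U = volume.restrict (Set.Ioo (0 : ℝ) 1)) (hV : ∀ᵐ ω ∂P, 0 ≤ V ω)
    (hInd : IndepFun U V P) {a b : ℝ} (ha : 0 ≤ a) (hb : 0 ≤ b) :
    ∫ ω, exp (-(a * (U ω * V ω)) - b * ((1 - U ω) * V ω)) ∂P
      = ∫ u in Set.Ioo (0 : ℝ) 1, ∫ ω, exp (-(((a - b) * u + b) * V ω)) ∂P := by
  have hU01 : ∀ᵐ ω ∂P, U ω ∈ Set.Ioo (0 : ℝ) 1 := by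
    refine (ae_map_iff hUm.aemeasurable measurableSet_Ioo).1 ?_
    rw [hU]
    exact ae_restrict_mem measurableSet_Ioo
  have hint : Integrable (fun ω => exp (-(a * (U ω * V ω)) - b * ((1 - U ω) * V ω))) P := by
    refine Integrable.of_bound (by fun_prop) 1 ?_
    filter_upwards [hU01, hV] with ω ⟨hU0, hU1⟩ hVω
    rw [norm_of_nonneg (exp_pos _).le, exp_le_one_iff]
    nlinarith [mul_nonneg ha (mul_nonneg hU0.le hVω),
      mul_nonneg hb (mul_nonneg (sub_nonneg.2 hU1.le) hVω)]
  rw [integral_comp_eq_integral_integral_of_indepFun hUm hVm hInd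
    (f := fun p => exp (-(a * (p.1 * p.2)) - b * ((1 - p.1) * p.2)))
    (by fun_prop : Continuous _).stronglyMeasurable hint, hU]
  congr! 4 with u ω
  dsimp only
  congr 1
  ring

end

/-- If `(X,Y)` is equal in distribution to `(UV,(1-U)V)` with `U` uniform on `(0,1)`
independent of the nonnegative random variable `V`, and
`I(α) = ∫_0^α E[exp(-γV)] dγ`, then `E[exp(-αX)] = I(α)/α` for `α > 0`, and
`E[exp(-αX-βY)] = (I(α)-I(β))/(α-β)` for distinct positive `α, β`. -/
theorem laplace_transforms_of_classK
    {Ω : Type*} [MeasurableSpace Ω] (P : Measure Ω) [IsProbabilityMeasure P]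
    (X Y U V : Ω → ℝ) (hXm : Measurable X) (hYm : Measurable Y)
    (hUm : Measurable U) (hVm : Measurable V)
    (hU : Measure.map U P = volume.restrict (Set.Ioo (0 : ℝ) 1))
    (hV : ∀ ω, 0 ≤ V ω)
    (hInd : IndepFun U V P)
    (hdist : Measure.map (fun ω => (X ω, Y ω)) P
      = Measure.map (fun ω => (U ω * V ω, (1 - U ω) * V ω)) P)
    (I : ℝ → ℝ)
    (hI : ∀ α : ℝ, I α = ∫ γ in (0:ℝ)..α, ∫ ω, Real.exp (-(γ * V ω)) ∂P) :
    (∀ α : ℝ, 0 < α → ∫ ω, Real.exp (-(α * X ω)) ∂P = I α / α) ∧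
    (∀ α β : ℝ, 0 < α → 0 < β → α ≠ β →
      ∫ ω, Real.exp (-(α * X ω) - β * Y ω) ∂P = (I α - I β) / (α - β)) := by
  have hVae : ∀ᵐ ω ∂P, 0 ≤ V ω := ae_of_all _ hV
  have hlaw : IdentDistrib (fun ω => (X ω, Y ω)) (fun ω => (U ω * V ω, (1 - U ω) * V ω)) P P :=
    ⟨(hXm.prodMk hYm).aemeasurable,
      ((hUm.mul hVm).prodMk ((measurable_const.sub hUm).mul hVm)).aemeasurable, hdist⟩
  have key : ∀ a b : ℝ, 0 ≤ a → 0 ≤ b → a ≠ b → ∫ ω, exp (-(a * X ω) - b * Y ω) ∂P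
      = (a - b)⁻¹ * ∫ γ in b..a, ∫ ω, exp (-(γ * V ω)) ∂P := by
    intro a b ha hb hab
    have hF : Measurable fun p : ℝ × ℝ => exp (-(a * p.1) - b * p.2) := by fun_prop
    have hXY : ∫ ω, exp (-(a * X ω) - b * Y ω) ∂P
        = ∫ ω, exp (-(a * (U ω * V ω)) - b * ((1 - U ω) * V ω)) ∂P :=
      (hlaw.comp hF).integral_eq
    rw [hXY, integral_exp_neg_mul_uniform_split hUm hVm hU hVae hInd ha hb,
      setIntegral_Ioo_zero_one_comp_mul_add (fun γ => ∫ ω, exp (-(γ * V ω)) ∂P)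
        (sub_ne_zero.2 hab), sub_add_cancel]
  refine ⟨fun α hα => ?_, fun α β hα hβ hαβ => ?_⟩
  · simpa [hI, div_eq_inv_mul] using key α 0 hα.le le_rfl hα.ne'
  · rw [key α β hα.le hβ.le hαβ, hI, hI, div_eq_inv_mul,
      intervalIntegral.integral_interval_sub_left
        (intervalIntegrable_integral_exp_neg_mul hVm hVae le_rfl hα.le)
        (intervalIntegrable_integral_exp_neg_mul hVm hVae le_rfl hβ.le)]
end

section
/- Let V be a nonnegative integrable random variable and U uniform on (0,1) independent of V, and set X = UV. If f(α) := E[exp(-αX)], then for every α > 0, E[exp(-αV)] = f(α) + α·f'(α), i.e., the Laplace transform of V equals the derivative of α ↦ α·f(α). -/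
open MeasureTheory ProbabilityTheory Real

/-! With `X = UV ≥ 0` we have `f(α) = mgf X (-α)`, and every negative argument lies in the
interior of the domain of the mgf of a nonnegative variable; so `f` is differentiable at `α > 0`
and `f(α) + α f'(α) = E[(1 - αX) e^{-αX}]`. By independence this is `E[g(V)]` with
`g(v) = ∫₀¹ (1 - αuv) e^{-αuv} du`, and `g(v) = e^{-αv}` because the integrand is the
`u`-derivative of `u e^{-αuv}`. -/

section MGF

variable {Ω : Type*} [MeasurableSpace Ω] {μ : Measure Ω} {X : Ω → ℝ} {t : ℝ}

lemma Iio_subset_interior_integrableExpSet [IsFiniteMeasure μ] (hX : AEMeasurable X μ)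
    (hX0 : 0 ≤ᵐ[μ] X) : Set.Iio 0 ⊆ interior (integrableExpSet X μ) := by
  rw [← interior_Iic]
  refine interior_mono fun s (hs : s ≤ 0) => ?_
  refine Integrable.of_bound (hX.const_mul s).exp.aestronglyMeasurable 1 ?_
  filter_upwards [hX0] with ω hω
  rw [norm_of_nonneg (exp_pos _).le, exp_le_one_iff]
  exact mul_nonpos_of_nonpos_of_nonneg hs hω

lemma integrable_one_add_mul_mul_exp_mul (ht : t ∈ interior (integrableExpSet X μ)) :
    Integrable (fun ω ↦ (1 + t * X ω) * exp (t * X ω)) μ := by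
  have h := (integrable_of_mem_integrableExpSet (interior_subset ht)).add
    ((integrable_pow_mul_exp_of_mem_interior_integrableExpSet ht 1).const_mul t)
  refine h.congr (ae_of_all _ fun ω => ?_)
  simp only [Pi.add_apply, pow_one]
  ring

lemma mgf_add_mul_integral_mul_exp_mul (ht : t ∈ interior (integrableExpSet X μ)) :
    mgf X μ t + t * μ[fun ω ↦ X ω * exp (t * X ω)] =
      μ[fun ω ↦ (1 + t * X ω) * exp (t * X ω)] := by
  have hXexp : Integrable (fun ω ↦ X ω * exp (t * X ω)) μ := by
    simpa using integrable_pow_mul_exp_of_mem_interior_integrableExpSet ht 1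
  rw [mgf, ← integral_const_mul, ← integral_add
    (integrable_of_mem_integrableExpSet (interior_subset ht)) (hXexp.const_mul t)]
  congr 1 with ω
  ring

end MGF

theorem ProbabilityTheory.IndepFun.integral_comp_eq_integral_integral {Ω α β E : Type*}
    [MeasurableSpace Ω] [MeasurableSpace α] [MeasurableSpace β]
    [NormedAddCommGroup E] [NormedSpace ℝ E]
    {P : Measure Ω} [IsFiniteMeasure P] {U : Ω → α} {V : Ω → β} (hInd : IndepFun U V P)
    (hU : AEMeasurable U P) (hV : AEMeasurable V P) {g : α × β → E}
    (hg : AEStronglyMeasurable g ((P.map U).prod (P.map V)))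
    (hgi : Integrable (fun ω ↦ g (U ω, V ω)) P) :
    ∫ ω, g (U ω, V ω) ∂P = ∫ v, ∫ u, g (u, v) ∂P.map U ∂P.map V := by
  have hmap := hInd.map_prod_eq_prod_map_map hU hV
  rw [← hmap] at hg
  have hUV : AEMeasurable (fun ω ↦ (U ω, V ω)) P := hU.prodMk hV
  rw [← integral_map hUV hg, hmap, integral_prod_symm]
  exact hmap ▸ (integrable_map_measure hg hUV).2 hgi

lemma integral_Ioo_one_add_mul_mul_exp_mul (c : ℝ) :
    ∫ u in Set.Ioo (0 : ℝ) 1, (1 + c * u) * exp (c * u) = exp c := by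
  have hderiv : ∀ u ∈ Set.uIcc (0 : ℝ) 1,
      HasDerivAt (fun u ↦ u * exp (c * u)) ((1 + c * u) * exp (c * u)) u := by
    intro u _
    exact ((hasDerivAt_id' u).mul ((hasDerivAt_id' u).const_mul c).exp).congr_deriv (by ring)
  have hcont : Continuous fun u : ℝ ↦ (1 + c * u) * exp (c * u) := by fun_prop
  rw [← integral_Ioc_eq_integral_Ioo, ← intervalIntegral.integral_of_le zero_le_one,
    intervalIntegral.integral_eq_sub_of_hasDerivAt hderiv (hcont.intervalIntegrable 0 1)]
  simp

lemma integral_one_add_mul_mul_exp_mul_of_indepFun_uniform {Ω : Type*} [MeasurableSpace Ω]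
    {P : Measure Ω} [IsFiniteMeasure P] {U V : Ω → ℝ}
    (hUm : AEMeasurable U P) (hVm : AEMeasurable V P)
    (hU : P.map U = volume.restrict (Set.Ioo (0 : ℝ) 1)) (hInd : IndepFun U V P) (t : ℝ)
    (hint : Integrable (fun ω ↦ (1 + t * (U ω * V ω)) * exp (t * (U ω * V ω))) P) :
    ∫ ω, (1 + t * (U ω * V ω)) * exp (t * (U ω * V ω)) ∂P =
      ∫ ω, exp (t * V ω) ∂P := by
  let g : ℝ × ℝ → ℝ := fun p ↦ (1 + t * (p.1 * p.2)) * exp (t * (p.1 * p.2))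
  have hg : Continuous g := by fun_prop
  have hinner (v : ℝ) : ∫ u in Set.Ioo (0 : ℝ) 1, g (u, v) = exp (t * v) := by
    simp only [g, show ∀ u, t * (u * v) = t * v * u from fun u ↦ by ring]
    exact integral_Ioo_one_add_mul_mul_exp_mul (t * v)
  rw [hInd.integral_comp_eq_integral_integral (g := g) hUm hVm hg.aestronglyMeasurable hint, hU]
  simp only [hinner]
  exact integral_map hVm (by fun_prop)

theorem laplace_V_eq_deriv_of_uniform_split_general
    {Ω : Type*} [MeasurableSpace Ω] (P : Measure Ω) [IsProbabilityMeasure P]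
    (U V : Ω → ℝ) (hUm : Measurable U) (hVm : Measurable V)
    (hU : Measure.map U P = volume.restrict (Set.Ioo (0 : ℝ) 1))
    (hV : ∀ ω, 0 ≤ V ω)
    (hInd : IndepFun U V P)
    (f : ℝ → ℝ)
    (hf : ∀ α : ℝ, f α = ∫ ω, Real.exp (-(α * (U ω * V ω))) ∂P) :
    ∀ α : ℝ, 0 < α → ∃ d : ℝ, HasDerivAt f d α ∧
      ∫ ω, Real.exp (-(α * V ω)) ∂P = f α + α * d := by
  intro α hα
  set X : Ω → ℝ := fun ω ↦ U ω * V ω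
  have hU01 : ∀ᵐ ω ∂P, U ω ∈ Set.Ioo (0 : ℝ) 1 :=
    ae_of_ae_map hUm.aemeasurable (hU ▸ ae_restrict_mem measurableSet_Ioo)
  have hX0 : 0 ≤ᵐ[P] X := hU01.mono fun ω hω ↦ mul_nonneg hω.1.le (hV ω)
  have hmem : -α ∈ interior (integrableExpSet X P) :=
    Iio_subset_interior_integrableExpSet (hUm.mul hVm).aemeasurable hX0 (neg_lt_zero.2 hα)
  have hf_mgf : f = fun a ↦ mgf X P (-a) := funext fun a ↦ by simp only [hf, mgf, neg_mul, X]
  refine ⟨-P[fun ω ↦ X ω * exp (-α * X ω)], ?_, ?_⟩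
  · rw [hf_mgf]
    exact ((hasDerivAt_mgf hmem).comp α (hasDerivAt_neg α)).congr_deriv (mul_neg_one _)
  · rw [hf_mgf, mul_neg, ← neg_mul, mgf_add_mul_integral_mul_exp_mul hmem,
      integral_one_add_mul_mul_exp_mul_of_indepFun_uniform hUm.aemeasurable hVm.aemeasurable
        hU hInd (-α) (integrable_one_add_mul_mul_exp_mul hmem)]
    simp only [neg_mul]

/-- If `V` is nonnegative and integrable, `U` is uniform on `(0,1)` independent of `V`,
`X = UV`, and `f(α) = E[exp(-αX)]`, then for every `α > 0` the function `f` is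
differentiable at `α` and `E[exp(-αV)] = f(α) + α f'(α)`. -/
theorem laplace_V_eq_deriv_of_uniform_split
    {Ω : Type*} [MeasurableSpace Ω] (P : Measure Ω) [IsProbabilityMeasure P]
    (U V : Ω → ℝ) (hUm : Measurable U) (hVm : Measurable V)
    (hU : Measure.map U P = volume.restrict (Set.Ioo (0 : ℝ) 1))
    (hV : ∀ ω, 0 ≤ V ω) (hVint : Integrable V P)
    (hInd : IndepFun U V P)
    (f : ℝ → ℝ)
    (hf : ∀ α : ℝ, f α = ∫ ω, Real.exp (-(α * (U ω * V ω))) ∂P) :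
    ∀ α : ℝ, 0 < α → ∃ d : ℝ, HasDerivAt f d α ∧
      ∫ ω, Real.exp (-(α * V ω)) ∂P = f α + α * d :=
  laplace_V_eq_deriv_of_uniform_split_general P U V hUm hVm hU hV hInd f hf
end

section
/- Fix c ∈ (0,1) and define ψ(α) := α - √(2α + c²) + c and α* := 2(1-c). Let μ = 1, M = 1/c, and F(α,β;c) := 8c / [ (√(2α+c²)+√(2β+c²)) · (√(2α+c²)+2-c) · (√(2β+c²)+2-c) ]. Then for all nonnegative α ≠ β with α ≠ α* and β ≠ α*, ((α*·μ)/((M·μ - 1)(α-β))) · (ψ(α)/(α-α*) - ψ(β)/(β-α*)) = F(α,β;c). -/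
open Real

/-- For `c ∈ (0,1)`, `μ = 1`, `M = 1/c`, `α* = 2(1-c)`, `ψ(α) = α - √(2α+c²) + c`, and
distinct nonnegative `α, β` with `α ≠ α*`, `β ≠ α*`:
`((α* μ)/((Mμ - 1)(α-β))) (ψ(α)/(α-α*) - ψ(β)/(β-α*)) = F(α,β;c)` where
`F(α,β;c) = 8c / [(√(2α+c²)+√(2β+c²))(√(2α+c²)+2-c)(√(2β+c²)+2-c)]`. -/
theorem idle_period_joint_laplace_identity (c : ℝ) (hc0 : 0 < c) (hc1 : c < 1)
    (ψ : ℝ → ℝ)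
    (hψ : ∀ α : ℝ, 0 ≤ α → ψ α = α - Real.sqrt (2 * α + c ^ 2) + c)
    (μ M αstar : ℝ) (hμ : μ = 1) (hM : M = 1 / c) (hstar : αstar = 2 * (1 - c)) :
    ∀ α β : ℝ, 0 ≤ α → 0 ≤ β → α ≠ β → α ≠ αstar → β ≠ αstar →
      ((αstar * μ) / ((M * μ - 1) * (α - β)))
          * (ψ α / (α - αstar) - ψ β / (β - αstar))
        = 8 * c /
            ((Real.sqrt (2 * α + c ^ 2) + Real.sqrt (2 * β + c ^ 2))
              * (Real.sqrt (2 * α + c ^ 2) + 2 - c)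
              * (Real.sqrt (2 * β + c ^ 2) + 2 - c)) := by
  intro α β hα0 hβ0 hαβ hαs hβs
  subst hμ hM hstar
  rw [hψ α hα0, hψ β hβ0]
  set a := Real.sqrt (2 * α + c ^ 2) with ha
  set b := Real.sqrt (2 * β + c ^ 2) with hb
  have ha2 : a ^ 2 = 2 * α + c ^ 2 := Real.sq_sqrt (by nlinarith)
  have hb2 : b ^ 2 = 2 * β + c ^ 2 := Real.sq_sqrt (by nlinarith)
  have hcc : c = Real.sqrt (c ^ 2) := (Real.sqrt_sq hc0.le).symm
  have hac : c ≤ a := by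
    rw [ha, hcc]; exact Real.sqrt_le_sqrt (by nlinarith)
  have hbc : c ≤ b := by
    rw [hb, hcc]; exact Real.sqrt_le_sqrt (by nlinarith)
  have hab : a + b ≠ 0 := by positivity
  have ha2c : a + 2 - c ≠ 0 := by nlinarith
  have hb2c : b + 2 - c ≠ 0 := by nlinarith
  have hd1 : α - β ≠ 0 := sub_ne_zero.mpr hαβ
  have hd2 : α - 2 * (1 - c) ≠ 0 := sub_ne_zero.mpr hαs
  have hd3 : β - 2 * (1 - c) ≠ 0 := sub_ne_zero.mpr hβs
  have hcne : c ≠ 0 := hc0.ne'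
  have h1c : (1 : ℝ) - c ≠ 0 := sub_ne_zero.mpr hc1.ne'
  have habne : a - b ≠ 0 := by
    intro h
    apply hd1
    have : a = b := by linarith
    nlinarith
  have hA : (α - a + c) / (α - 2 * (1 - c)) = (a - c) / (a + 2 - c) := by
    rw [div_eq_div_iff hd2 ha2c]
    nlinarith [sq_nonneg a]
  have hB : (β - b + c) / (β - 2 * (1 - c)) = (b - c) / (b + 2 - c) := by
    rw [div_eq_div_iff hd3 hb2c]
    nlinarith [sq_nonneg b]
  rw [hA, hB]
  have hdiff : (a - c) / (a + 2 - c) - (b - c) / (b + 2 - c)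
      = 2 * (a - b) / ((a + 2 - c) * (b + 2 - c)) := by
    field_simp
    ring
  rw [hdiff]
  have hcoef : 2 * (1 - c) * 1 / ((1 / c * 1 - 1) * (α - β)) = 2 * c / (α - β) := by
    rw [div_eq_div_iff (by
      apply mul_ne_zero _ hd1
      field_simp
      exact div_ne_zero h1c hcne) hd1]
    field_simp
  rw [hcoef]
  have hαβa : α - β = (a - b) * (a + b) / 2 := by nlinarith
  rw [hαβa]
  field_simp
  ring
end
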